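/- arXiv:2406.00786 — 7 statements merged into one kernel-verified Lean document; each statement's English description precedes it below -/
import Mathlib

section
/- For all real x > 0, Stirling's bounds hold: √(2π)·x^(x−1/2)·e^(−x) ≤ Γ(x) ≤ √(2π)·x^(x−1/2)·e^(−x)·e^(1/(12x)). -/
/-!
Write `Γ x = exp (logStirling x + μ x)`, with `μ` Binet's remainder `stirlingRemainder`. The
functional equation gives `μ x - μ (x + 1) = (x + 1/2) log (1 + 1/x) - 1`, and the series of
the logarithm in `t = 1/(2x+1)` turns this into `∑_{k ≥ 1} t^(2k)/(2k+1)`. Comparison with the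
geometric series gives `0 ≤ μ x - μ (x + 1) ≤ 1/(12x) - 1/(12(x+1))`, so along `x + n` the
sequence `μ` decreases while `μ - 1/(12 ·)` increases. Both tend to `0`: at integers this is
Stirling's formula for `n!`, and `log Γ (x + n) - log Γ n - x log n → 0` (Bohr–Mollerup)
transfers it to `x + n`. Hence `0 ≤ μ x ≤ 1/(12x)`.
-/

open Real Filter Topology

noncomputable def logStirling (x : ℝ) : ℝ := (x - 1 / 2) * log x - x + log √(2 * π)

noncomputable def stirlingRemainder (x : ℝ) : ℝ := log (Gamma x) - logStirling x

lemma exp_logStirling {x : ℝ} (hx : 0 < x) :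
    exp (logStirling x) = √(2 * π) * x ^ (x - 1 / 2) * exp (-x) := by
  rw [logStirling, exp_add, exp_sub, exp_log (by positivity), rpow_def_of_pos hx, exp_neg,
    mul_comm (log x), div_eq_mul_inv]
  ring

lemma Gamma_eq_exp_logStirling_mul {x : ℝ} (hx : 0 < x) :
    Gamma x = exp (logStirling x) * exp (stirlingRemainder x) := by
  rw [← exp_add, stirlingRemainder, add_sub_cancel, exp_log (Gamma_pos_of_pos hx)]

lemma log_Gamma_add_one {x : ℝ} (hx : 0 < x) :
    log (Gamma (x + 1)) = log (Gamma x) + log x := by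
  rw [Gamma_add_one hx.ne', log_mul hx.ne' (Gamma_pos_of_pos hx).ne', add_comm]

lemma stirlingRemainder_sub_stirlingRemainder_add_one {x : ℝ} (hx : 0 < x) :
    stirlingRemainder x - stirlingRemainder (x + 1) = (x + 1 / 2) * log (1 + x⁻¹) - 1 := by
  have hlog : log (1 + x⁻¹) = log (x + 1) - log x := by
    rw [← log_div (by positivity) hx.ne']
    congr 1
    field_simp
  rw [stirlingRemainder, stirlingRemainder, logStirling, logStirling, log_Gamma_add_one hx, hlog]
  ring

lemma hasSum_stirlingRemainder_sub_stirlingRemainder_add_one {x : ℝ} (hx : 0 < x) :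
    HasSum (fun k : ℕ => 1 / (2 * ((k + 1 : ℕ) : ℝ) + 1) * ((1 / (2 * x + 1)) ^ 2) ^ (k + 1))
      (stirlingRemainder x - stirlingRemainder (x + 1)) := by
  let f (k : ℕ) : ℝ := 1 / (2 * k + 1) * ((1 / (2 * x + 1)) ^ 2) ^ k
  change HasSum (fun k => f (k + 1)) _
  have hf0 : ∑ i ∈ Finset.range 1, f i = 1 := by simp [f]
  rw [hasSum_nat_add_iff, hf0, stirlingRemainder_sub_stirlingRemainder_add_one hx, sub_add_cancel]
  refine ((hasSum_log_one_add_inv hx).mul_left (x + 1 / 2)).congr_fun fun k => ?_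
  have : 2 * x + 1 ≠ 0 := by positivity
  simp only [f, pow_mul, pow_succ]
  field_simp

lemma stirlingRemainder_add_one_le {x : ℝ} (hx : 0 < x) :
    stirlingRemainder (x + 1) ≤ stirlingRemainder x :=
  sub_nonneg.1 <| (hasSum_stirlingRemainder_sub_stirlingRemainder_add_one hx).nonneg
    fun _ => by positivity

lemma stirlingRemainder_sub_stirlingRemainder_add_one_le {x : ℝ} (hx : 0 < x) :
    stirlingRemainder x - stirlingRemainder (x + 1) ≤ 1 / (12 * x) - 1 / (12 * (x + 1)) := by
  set r := (1 / (2 * x + 1)) ^ 2 with hr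
  have hr1 : r < 1 := by
    rw [hr, div_pow, one_pow, div_lt_one (by positivity)]
    nlinarith
  have hgeom : HasSum (fun k : ℕ => r ^ (k + 1) / 3) (r / 3 * (1 - r)⁻¹) :=
    ((hasSum_geometric_of_lt_one (by positivity) hr1).mul_left (r / 3)).congr_fun fun k => by ring
  have hsum : r / 3 * (1 - r)⁻¹ = 1 / (12 * x) - 1 / (12 * (x + 1)) := by
    have h1r : 1 - r = 4 * x * (x + 1) / (2 * x + 1) ^ 2 := by
      rw [hr]
      field_simp
      ring
    rw [h1r, hr]
    field_simp
    ring
  rw [← hsum]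
  refine hasSum_le (fun k => ?_) (hasSum_stirlingRemainder_sub_stirlingRemainder_add_one hx) hgeom
  rw [div_eq_inv_mul _ 3, one_div]
  gcongr
  push_cast
  linarith

lemma stirlingRemainder_natCast {n : ℕ} (hn : n ≠ 0) :
    stirlingRemainder n = log (Stirling.stirlingSeq n) - log √π := by
  have hn' : (0 : ℝ) < n := by positivity
  have hfact : log (n.factorial : ℝ) = log (Gamma n) + log n := by
    rw [← Gamma_nat_eq_factorial, log_Gamma_add_one hn']
  rw [Stirling.log_stirlingSeq_formula, stirlingRemainder, logStirling, hfact,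
    log_mul two_ne_zero hn'.ne', log_div hn'.ne' (exp_pos 1).ne', log_exp,
    log_sqrt (by positivity), log_sqrt pi_pos.le, log_mul two_ne_zero pi_ne_zero]
  ring

lemma tendsto_stirlingRemainder_natCast :
    Tendsto (fun n : ℕ => stirlingRemainder n) atTop (𝓝 0) := by
  have h := ((continuousAt_log (by positivity)).tendsto.comp
    Stirling.tendsto_stirlingSeq_sqrt_pi).sub_const (log √π)
  rw [sub_self] at h
  exact h.congr' <| (eventually_ne_atTop 0).mono fun n hn => (stirlingRemainder_natCast hn).symm

lemma tendsto_log_Gamma_add_natCast_sub {x : ℝ} (hx : 0 < x) :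
    Tendsto (fun n : ℕ => log (Gamma (x + n)) - log (Gamma n) - x * log n) atTop (𝓝 0) := by
  rw [← tendsto_add_atTop_iff_nat 1]
  have h := (tendsto_const_nhds (x := log (Gamma x))).sub
    ((BohrMollerup.tendsto_log_gamma hx).add (tendsto_log_nat_add_one_sub_log.const_mul x))
  rw [mul_zero, add_zero, sub_self] at h
  -- `logGammaSeq x n` telescopes to `log Γ x - log Γ (x + (n + 1)) + log Γ (n + 1) + x log n`
  refine h.congr fun n => ?_
  have hsum := BohrMollerup.f_add_nat_eq (f := log ∘ Gamma) (fun hy => log_Gamma_add_one hy) hx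
    (n + 1)
  have hfact : log (n.factorial : ℝ) = log (Gamma (n + 1)) := by rw [Gamma_nat_eq_factorial]
  simp only [Function.comp_apply] at hsum
  rw [BohrMollerup.logGammaSeq, hfact, hsum]
  push_cast
  ring

lemma tendsto_logStirling_add_sub (x : ℝ) :
    Tendsto (fun t => logStirling (x + t) - logStirling t - x * log t) atTop (𝓝 0) := by
  have hlog : Tendsto (fun t => log (1 + x / t)) atTop (𝓝 0) := by
    have h : Tendsto (fun t : ℝ => 1 + x / t) atTop (𝓝 1) := by
      simpa using ((tendsto_const_nhds (x := x)).div_atTop tendsto_id).const_add 1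
    simpa [Function.comp_def] using (continuousAt_log one_ne_zero).tendsto.comp h
  have h := ((tendsto_mul_log_one_add_div_atTop x).add (hlog.const_mul (x - 1 / 2))).sub_const x
  rw [mul_zero, add_zero, sub_self] at h
  refine h.congr' ?_
  filter_upwards [eventually_gt_atTop |x|] with t ht
  have ht0 : 0 < t := (abs_nonneg x).trans_lt ht
  have hxt : 0 < x + t := by linarith [neg_abs_le x]
  have hlog_add : log (x + t) = log t + log (1 + x / t) := by
    rw [show 1 + x / t = (x + t) / t by field_simp; ring, log_div hxt.ne' ht0.ne']
    ring
  simp only [logStirling, hlog_add]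
  ring

lemma tendsto_stirlingRemainder_add_natCast {x : ℝ} (hx : 0 < x) :
    Tendsto (fun n : ℕ => stirlingRemainder (x + n)) atTop (𝓝 0) := by
  have h := ((tendsto_log_Gamma_add_natCast_sub hx).add tendsto_stirlingRemainder_natCast).sub
    ((tendsto_logStirling_add_sub x).comp tendsto_natCast_atTop_atTop)
  rw [add_zero, sub_zero] at h
  refine h.congr fun n => ?_
  simp only [Function.comp_apply, stirlingRemainder]
  ring

lemma stirlingRemainder_nonneg {x : ℝ} (hx : 0 < x) : 0 ≤ stirlingRemainder x := by
  have hanti : Antitone fun n : ℕ => stirlingRemainder (x + n) :=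
    antitone_nat_of_succ_le fun n => by
      simpa [add_assoc] using stirlingRemainder_add_one_le (x := x + n) (by positivity)
  simpa using hanti.le_of_tendsto (tendsto_stirlingRemainder_add_natCast hx) 0

lemma stirlingRemainder_le {x : ℝ} (hx : 0 < x) : stirlingRemainder x ≤ 1 / (12 * x) := by
  have hmono : Monotone fun n : ℕ => stirlingRemainder (x + n) - 1 / (12 * (x + n)) :=
    monotone_nat_of_le_succ fun n => by
      have := stirlingRemainder_sub_stirlingRemainder_add_one_le (x := x + n) (by positivity)
      simp only [Nat.cast_succ, ← add_assoc]
      linarith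
  have hlim :
      Tendsto (fun n : ℕ => stirlingRemainder (x + n) - 1 / (12 * (x + n))) atTop (𝓝 0) := by
    have h := (tendsto_stirlingRemainder_add_natCast hx).sub <|
      (tendsto_const_nhds (x := (1 : ℝ))).div_atTop <|
        (tendsto_atTop_add_const_left _ x tendsto_natCast_atTop_atTop).const_mul_atTop
          (by norm_num : (0 : ℝ) < 12)
    rwa [sub_zero] at h
  simpa [sub_nonpos] using hmono.ge_of_tendsto hlim 0

theorem stirling_bounds (x : ℝ) (hx : 0 < x) :
    Real.sqrt (2 * π) * x ^ (x - 1/2) * Real.exp (-x) ≤ Real.Gamma x ∧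
    Real.Gamma x ≤ Real.sqrt (2 * π) * x ^ (x - 1/2) * Real.exp (-x) * Real.exp (1 / (12 * x)) := by
  rw [Gamma_eq_exp_logStirling_mul hx, ← exp_logStirling hx]
  constructor
  · exact le_mul_of_one_le_right (exp_pos _).le (one_le_exp (stirlingRemainder_nonneg hx))
  · gcongr
    exact stirlingRemainder_le hx
end

section
/- For real numbers x, y with x ≥ 1, one has |Γ(x + iy)/Γ(x)| ≤ exp(−(1/4)·min(|y|, y²/x)). -/
/-!
By Euler's limit formula `Γ(s) = lim GammaSeq s n`, the ratio `|Γ(x + iy) / Γ(x)|` is the infinite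
product `∏_{j ≥ 0} (x + j) / |x + j + iy|`. Since `exp (m / 2) ≤ 1 + m` on `[0, 1]`, each factor is
at most `exp (-¼ min 1 (y² / (x + j)²))`, and the sum of these minima dominates, as for an integral
test, `∫_x^∞ min 1 (y² / t²) dt ≥ min |y| (y² / x)`.
-/

open Complex Filter Finset Topology

lemma exp_half_le_one_add {s : ℝ} (hs₀ : 0 ≤ s) (hs₁ : s ≤ 1) : Real.exp (s / 2) ≤ 1 + s :=
  calc Real.exp (s / 2) ≤ 1 / (1 - s / 2) :=
        Real.exp_bound_div_one_sub_of_interval (by linarith) (by linarith)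
    _ ≤ 1 + s := by rw [div_le_iff₀ (by linarith)]; nlinarith

lemma div_norm_add_mul_I_le {a : ℝ} (ha : 0 < a) (y : ℝ) :
    a / ‖(a : ℂ) + y * I‖ ≤ Real.exp (-(1 / 4) * min 1 (y ^ 2 / a ^ 2)) := by
  set m := min 1 (y ^ 2 / a ^ 2)
  have hm₀ : 0 ≤ m := le_min zero_le_one (by positivity)
  have hgrowth : a * Real.exp (m / 4) ≤ ‖(a : ℂ) + y * I‖ := by
    rw [norm_add_mul_I]
    refine Real.le_sqrt_of_sq_le ?_
    calc (a * Real.exp (m / 4)) ^ 2 = a ^ 2 * Real.exp (m / 2) := by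
          rw [mul_pow, ← Real.exp_nat_mul]; push_cast; ring_nf
      _ ≤ a ^ 2 * (1 + y ^ 2 / a ^ 2) := by
          gcongr
          exact (exp_half_le_one_add hm₀ (min_le_left _ _)).trans (by gcongr; exact min_le_right _ _)
      _ = a ^ 2 + y ^ 2 := by field_simp
  have hN : 0 < ‖(a : ℂ) + y * I‖ := lt_of_lt_of_le (by positivity) hgrowth
  rw [div_le_iff₀ hN, show -(1 / 4) * m = -(m / 4) by ring, Real.exp_neg, ← div_eq_inv_mul,
    le_div_iff₀ (by positivity)]
  exact hgrowth

/-- `tailIntegral y a = ∫_a^∞ min 1 (y² / t²) dt` for `a > 0`, in closed form. -/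
noncomputable def tailIntegral (y a : ℝ) : ℝ := if a ≤ |y| then 2 * |y| - a else y ^ 2 / a

lemma tailIntegral_sub_tailIntegral_add_one_le (y : ℝ) {a : ℝ} (ha : 0 < a) :
    tailIntegral y a - tailIntegral y (a + 1) ≤ min 1 (y ^ 2 / a ^ 2) := by
  have hy2 : y ^ 2 = |y| ^ 2 := (sq_abs y).symm
  unfold tailIntegral
  split_ifs
  · rw [min_eq_left ((one_le_div₀ (by positivity)).2 (by nlinarith))]
    linarith
  · rw [min_eq_left ((one_le_div₀ (by positivity)).2 (by nlinarith))]
    have hcross : 2 * |y| - (a + 1) ≤ y ^ 2 / (a + 1) := by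
      rw [le_div_iff₀ (by linarith)]; nlinarith [sq_nonneg (a + 1 - |y|)]
    linarith
  · linarith
  · rw [show y ^ 2 / a - y ^ 2 / (a + 1) = y ^ 2 / (a * (a + 1)) by field_simp; ring]
    refine le_min ?_ ?_
    · rw [div_le_one (by positivity)]; nlinarith [abs_nonneg y]
    · exact div_le_div_of_nonneg_left (by positivity) (by positivity) (by nlinarith)

lemma tailIntegral_sub_tailIntegral_add_nat_le (y : ℝ) {a : ℝ} (ha : 0 < a) (n : ℕ) :
    tailIntegral y a - tailIntegral y (a + n) ≤ ∑ j ∈ range n, min 1 (y ^ 2 / (a + j) ^ 2) := by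
  induction n with
  | zero => simp
  | succ n ih =>
    have hstep := tailIntegral_sub_tailIntegral_add_one_le y (a := a + n) (by positivity)
    rw [sum_range_succ, Nat.cast_succ, ← add_assoc]
    linarith

lemma tendsto_tailIntegral_atTop (y : ℝ) : Tendsto (tailIntegral y) atTop (𝓝 0) := by
  refine ((tendsto_const_nhds (x := y ^ 2)).div_atTop tendsto_id).congr' ?_
  filter_upwards [eventually_gt_atTop |y|] with a ha
  simp [tailIntegral, not_le.2 ha]

lemma min_abs_sq_div_le_tailIntegral (y a : ℝ) : min |y| (y ^ 2 / a) ≤ tailIntegral y a := by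
  unfold tailIntegral
  split_ifs
  · exact (min_le_left _ _).trans (by linarith)
  · exact min_le_right _ _

lemma norm_GammaSeq_div_GammaSeq_of_re_eq {s t : ℂ} (hst : s.re = t.re) {n : ℕ} (hn : n ≠ 0) :
    ‖GammaSeq s n / GammaSeq t n‖ = ∏ j ∈ range (n + 1), ‖t + j‖ / ‖s + j‖ := by
  have hpow : (n : ℝ) ^ t.re * n.factorial ≠ 0 := by positivity
  simp only [GammaSeq, norm_div, norm_mul, norm_prod, norm_natCast,
    norm_natCast_cpow_of_pos (Nat.pos_of_ne_zero hn), hst]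
  rw [prod_div_distrib, div_div_div_cancel_left' _ _ hpow]

lemma norm_GammaSeq_div_le {x : ℝ} (hx : 0 < x) (y : ℝ) {n : ℕ} (hn : n ≠ 0) :
    ‖GammaSeq (x + y * I) n / GammaSeq x n‖ ≤
      Real.exp (-(1 / 4) * (tailIntegral y x - tailIntegral y (x + (n + 1)))) := by
  rw [norm_GammaSeq_div_GammaSeq_of_re_eq (by simp) hn]
  calc ∏ j ∈ range (n + 1), ‖(x : ℂ) + j‖ / ‖x + y * I + j‖
      = ∏ j ∈ range (n + 1), (x + j) / ‖((x + j : ℝ) : ℂ) + y * I‖ := by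
        refine prod_congr rfl fun j _ => ?_
        rw [show (x : ℂ) + y * I + j = ((x + j : ℝ) : ℂ) + y * I by push_cast; ring]
        congr 1
        exact_mod_cast Complex.norm_of_nonneg (by positivity : 0 ≤ x + j)
    _ ≤ ∏ j ∈ range (n + 1), Real.exp (-(1 / 4) * min 1 (y ^ 2 / (x + j) ^ 2)) :=
        prod_le_prod (fun j _ => by positivity) fun j _ => div_norm_add_mul_I_le (by positivity) y
    _ = Real.exp (-(1 / 4) * ∑ j ∈ range (n + 1), min 1 (y ^ 2 / (x + j) ^ 2)) := by
        rw [mul_sum, Real.exp_sum]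
    _ ≤ _ := by
        have hsum := tailIntegral_sub_tailIntegral_add_nat_le y hx (n + 1)
        push_cast at hsum
        exact Real.exp_le_exp.2 (by linarith)

theorem gamma_ratio_bound (x y : ℝ) (hx : 1 ≤ x) :
    ‖Complex.Gamma (x + y * I) / Complex.Gamma (x)‖ ≤
      Real.exp (-(1/4) * min |y| (y ^ 2 / x)) := by
  have hx₀ : 0 < x := by linarith
  have hlim : Tendsto (fun n => ‖GammaSeq (x + y * I) n / GammaSeq x n‖) atTop
      (𝓝 ‖Gamma (x + y * I) / Gamma x‖) :=
    ((GammaSeq_tendsto_Gamma _).div (GammaSeq_tendsto_Gamma _)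
      (Gamma_ne_zero_of_re_pos (by simpa))).norm
  have hbound_lim : Tendsto
      (fun n : ℕ => Real.exp (-(1 / 4) * (tailIntegral y x - tailIntegral y (x + (n + 1)))))
      atTop (𝓝 (Real.exp (-(1 / 4) * tailIntegral y x))) := by
    have htail : Tendsto (fun n : ℕ => tailIntegral y (x + (n + 1))) atTop (𝓝 0) :=
      (tendsto_tailIntegral_atTop y).comp <| tendsto_atTop_add_const_left _ x <|
        tendsto_atTop_add_const_right _ 1 tendsto_natCast_atTop_atTop
    simpa using ((tendsto_const_nhds.sub htail).const_mul (-(1 / 4 : ℝ))).rexp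
  calc ‖Gamma (x + y * I) / Gamma x‖ ≤ Real.exp (-(1 / 4) * tailIntegral y x) :=
        le_of_tendsto_of_tendsto hlim hbound_lim
          ((eventually_ne_atTop 0).mono fun n hn => norm_GammaSeq_div_le hx₀ y hn)
    _ ≤ Real.exp (-(1/4) * min |y| (y ^ 2 / x)) := by
        have hmin := min_abs_sq_div_le_tailIntegral y x
        exact Real.exp_le_exp.2 (by linarith)
end

section
/- For real x ≥ 1 and real y, the complex Gamma function satisfies |Γ(x+iy)/Γ(x)| = ∏_{k=0}^{∞} (1 + y²/(x+k)²)^(−1/2). -/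
/-!
Divide Euler's limit `Γ(s) = lim n^s n! / (s (s+1) ⋯ (s+n))` at `s = x + iy` by the one at `x`:
since `n^s` and `n^x` have the same modulus, the modulus of the quotient is the partial product of
the factors `|x + k| / |x + iy + k|`. These lie in `[0, 1]`, so the products over finite sets
decrease and the unconditional product is the limit of the partial products.
-/

open Complex Filter Topology Finset

theorem hasProd_of_tendsto_prod_range_of_mem_Icc {a : ℕ → ℝ} (ha : ∀ k, a k ∈ Set.Icc 0 1)
    {L : ℝ} (h : Tendsto (fun n ↦ ∏ k ∈ range n, a k) atTop (𝓝 L)) : HasProd a L := by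
  have hanti : Antitone fun s : Finset ℕ ↦ ∏ k ∈ s, a k := fun s t hst ↦
    prod_le_prod_of_subset_of_le_one hst (fun k _ ↦ (ha k).1) fun k _ _ ↦ (ha k).2
  have hbdd : BddBelow (Set.range fun s : Finset ℕ ↦ ∏ k ∈ s, a k) :=
    ⟨0, by rintro _ ⟨s, rfl⟩; exact prod_nonneg fun k _ ↦ (ha k).1⟩
  have hinf := tendsto_atTop_ciInf hanti hbdd
  rwa [HasProd, tendsto_nhds_unique h (hinf.comp tendsto_finset_range)]

namespace Complex

theorem norm_GammaSeq_div_GammaSeq_re (s : ℂ) {n : ℕ} (hn : n ≠ 0) :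
    ‖GammaSeq s n / GammaSeq s.re n‖ = ∏ k ∈ range (n + 1), ‖(s.re + k : ℂ) / (s + k)‖ := by
  have hpow : ‖(n : ℂ) ^ s‖ = ‖(n : ℂ) ^ (s.re : ℂ)‖ := by
    rw [norm_natCast_cpow_of_pos (Nat.pos_of_ne_zero hn),
      norm_natCast_cpow_of_pos (Nat.pos_of_ne_zero hn), ofReal_re]
  have hA : ‖(n : ℂ) ^ (s.re : ℂ)‖ * ‖(n.factorial : ℂ)‖ ≠ 0 := by
    rw [norm_natCast_cpow_of_pos (Nat.pos_of_ne_zero hn), norm_natCast]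
    positivity
  simp only [GammaSeq, norm_div, norm_mul, norm_prod, hpow, prod_div_distrib]
  exact div_div_div_cancel_left' _ _ hA

theorem norm_re_add_natCast_le_norm_add_natCast (s : ℂ) (k : ℕ) :
    ‖(s.re + k : ℂ)‖ ≤ ‖s + k‖ := by
  rw [← ofReal_natCast, ← ofReal_add, norm_real, Real.norm_eq_abs]
  simpa using abs_re_le_norm (s + k)

theorem hasProd_norm_re_add_div_add (s : ℂ) (hs : 0 < s.re) :
    HasProd (fun k : ℕ ↦ ‖(s.re + k : ℂ) / (s + k)‖) ‖Gamma s / Gamma s.re‖ := by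
  refine hasProd_of_tendsto_prod_range_of_mem_Icc (fun k ↦ ⟨norm_nonneg _, ?_⟩) ?_
  · rw [norm_div]
    exact div_le_one_of_le₀ (norm_re_add_natCast_le_norm_add_natCast s k) (norm_nonneg _)
  have hlim : Tendsto (fun n ↦ ‖GammaSeq s n / GammaSeq s.re n‖) atTop
      (𝓝 ‖Gamma s / Gamma s.re‖) :=
    ((GammaSeq_tendsto_Gamma s).div (GammaSeq_tendsto_Gamma _)
      (Gamma_ne_zero_of_re_pos (by simpa using hs))).norm
  rw [← tendsto_add_atTop_iff_nat 1]
  refine hlim.congr' ?_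
  filter_upwards [eventually_ne_atTop 0] with n hn
  exact norm_GammaSeq_div_GammaSeq_re s hn

theorem norm_ofReal_div_add_mul_I {p : ℝ} (hp : 0 < p) (y : ℝ) :
    ‖(p : ℂ) / (p + y * I)‖ = (1 + y ^ 2 / p ^ 2) ^ (-(1 / 2) : ℝ) := by
  have hpy : 0 < p ^ 2 + y ^ 2 := by positivity
  rw [norm_div, norm_real, Real.norm_of_nonneg hp.le, norm_add_mul_I,
    show 1 + y ^ 2 / p ^ 2 = (p ^ 2 + y ^ 2) / p ^ 2 by field_simp,
    Real.rpow_neg (by positivity), ← Real.sqrt_eq_rpow, Real.sqrt_div hpy.le,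
    Real.sqrt_sq hp.le, inv_div]

end Complex

theorem gamma_ratio_prod (x y : ℝ) (hx : 1 ≤ x) :
    ‖Complex.Gamma (x + y * I) / Complex.Gamma (x)‖ =
      ∏' k : ℕ, (1 + y ^ 2 / (x + k) ^ 2) ^ (-(1/2) : ℝ) := by
  have hre : (x + y * I : ℂ).re = x := by simp
  have hprod := hasProd_norm_re_add_div_add (x + y * I) (by rw [hre]; linarith)
  rw [hre] at hprod
  refine (hprod.congr_fun fun k ↦ ?_).tprod_eq.symm
  rw [← norm_ofReal_div_add_mul_I (by positivity : 0 < x + k)]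
  push_cast
  ring_nf
end

section
/- For real x ≥ |y| > 0, the sum ∑_{k=0}^{∞} y²/(y² + (x+k)²) is strictly greater than y²/(2x). -/
/-!
Each term dominates the corresponding term of a telescoping series: for `t = x + k ≥ |y|`,
`y² / (y² + t²) > y² / (2t(t + 1)) = y²/(2t) - y²/(2(t + 1))`, because `y² + t² ≤ 2t² < 2t(t + 1)`.
The telescoping series sums to `y² / (2x)`, and the inequality is strict term by term.
-/

open Filter Topology

theorem Antitone.hasSum_sub_succ {f : ℕ → ℝ} {l : ℝ} (hf : Antitone f)
    (hl : Tendsto f atTop (𝓝 l)) : HasSum (fun n => f n - f (n + 1)) (f 0 - l) := by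
  rw [hasSum_iff_tendsto_nat_of_nonneg fun n => sub_nonneg.mpr (hf n.le_succ)]
  simpa only [Finset.sum_range_sub'] using hl.const_sub (f 0)

theorem hasSum_div_sub_div_add_one {c a : ℝ} (hc : 0 ≤ c) (ha : 0 < a) :
    HasSum (fun n : ℕ => c / (a + n) - c / (a + n + 1)) (c / a) := by
  have hanti : Antitone fun n : ℕ => c / (a + n) := fun m n hmn =>
    div_le_div_of_nonneg_left hc (by positivity) (by gcongr)
  have hlim : Tendsto (fun n : ℕ => c / (a + n)) atTop (𝓝 0) :=
    tendsto_const_nhds.div_atTop (tendsto_atTop_add_const_left _ a tendsto_natCast_atTop_atTop)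
  simpa [add_assoc] using hanti.hasSum_sub_succ hlim

theorem summable_div_add_sq_nat_add (c : ℝ) {a b : ℝ} (ha : 0 < a) (hb : 0 ≤ b) :
    Summable fun n : ℕ => c / (b + (a + n) ^ 2) := by
  have hdom : Summable fun n : ℕ => 1 / |n + a| ^ (2 : ℝ) :=
    (Real.summable_one_div_nat_add_rpow a 2).mpr one_lt_two
  have hsum : Summable fun n : ℕ => 1 / (b + (a + n) ^ 2) := by
    refine hdom.of_nonneg_of_le (fun n => by positivity) fun n => ?_
    rw [Real.rpow_two, sq_abs, add_comm (n : ℝ)]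
    gcongr
    exact le_add_of_nonneg_left hb
  simpa only [mul_one_div] using hsum.mul_left c

theorem half_sq_div_sub_half_sq_div_add_one_lt {y t : ℝ} (hy : y ≠ 0) (hyt : |y| ≤ t) :
    y ^ 2 / 2 / t - y ^ 2 / 2 / (t + 1) < y ^ 2 / (y ^ 2 + t ^ 2) := by
  have ht : 0 < t := (abs_pos.mpr hy).trans_le hyt
  have hyt2 : y ^ 2 ≤ t ^ 2 := sq_le_sq' (abs_le.mp hyt).1 (abs_le.mp hyt).2
  have hlhs : y ^ 2 / 2 / t - y ^ 2 / 2 / (t + 1) = y ^ 2 / (2 * t * (t + 1)) := by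
    field_simp
    ring
  rw [hlhs]
  exact div_lt_div_of_pos_left (by positivity) (by positivity) (by nlinarith)

theorem sum_gt_one (x y : ℝ) (hxy : |y| ≤ x) (hy : y ≠ 0) :
    (∑' k : ℕ, y ^ 2 / (y ^ 2 + (x + k) ^ 2)) > y ^ 2 / (2 * x) := by
  have hx : 0 < x := (abs_pos.mpr hy).trans_le hxy
  have hlt (k : ℕ) : y ^ 2 / 2 / (x + k) - y ^ 2 / 2 / (x + k + 1) < y ^ 2 / (y ^ 2 + (x + k) ^ 2) :=
    half_sq_div_sub_half_sq_div_add_one_lt hy (hxy.trans (le_add_of_nonneg_right k.cast_nonneg))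
  rw [gt_iff_lt, ← div_div]
  exact hasSum_lt (fun k => (hlt k).le) (hlt 0) (hasSum_div_sub_div_add_one (by positivity) hx)
    (summable_div_add_sq_nat_add _ hx (sq_nonneg y)).hasSum
end

section
/- For real numbers x, y with 0 < x < |y|, the sum ∑_{k=0}^{∞} y²/(y² + (x+k)²) is strictly greater than |y|/2. -/
open Filter Topology

/-! With `B = √(x² + y²)`, each term dominates `y² / (k + B) - y² / (k + 1 + B)`, because
`(k + B)(k + 1 + B) ≥ k² + 2kx + B² = y² + (x + k)²`. The series therefore dominates the
telescoping sum `y² / B`, and `B < 2|y|` since `x < |y|`. -/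

theorem le_tsum_of_sub_succ_le {f d : ℕ → ℝ} {l : ℝ} (hf : Tendsto f atTop (𝓝 l))
    (hd : Summable d) (h : ∀ n, f n - f (n + 1) ≤ d n) : f 0 - l ≤ ∑' n, d n := by
  refine le_of_tendsto_of_tendsto' (tendsto_const_nhds.sub hf) hd.hasSum.tendsto_sum_nat
    fun n => ?_
  rw [← Finset.sum_range_sub']
  exact Finset.sum_le_sum fun k _ => h k

section

variable {x : ℝ} (y : ℝ)

theorem summable_sq_div_sq_add_sq (hx : 0 < x) :
    Summable fun k : ℕ => y ^ 2 / (y ^ 2 + (x + k) ^ 2) := by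
  have hbase : Summable fun k : ℕ => 1 / |k + x| ^ (2 : ℝ) :=
    (Real.summable_one_div_nat_add_rpow x 2).mpr one_lt_two
  refine (hbase.mul_left (y ^ 2)).of_nonneg_of_le (fun k => by positivity) fun k => ?_
  rw [Real.rpow_two, sq_abs, add_comm (k : ℝ), mul_one_div]
  exact div_le_div_of_nonneg_left (sq_nonneg y) (by positivity)
    (le_add_of_nonneg_left (sq_nonneg y))

theorem sq_div_add_sqrt_sub_le (hx : 0 < x) {t : ℝ} (ht : 0 ≤ t) :
    y ^ 2 / (t + √(x ^ 2 + y ^ 2)) - y ^ 2 / (t + 1 + √(x ^ 2 + y ^ 2))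
      ≤ y ^ 2 / (y ^ 2 + (x + t) ^ 2) := by
  set B := √(x ^ 2 + y ^ 2)
  have hB2 : B ^ 2 = x ^ 2 + y ^ 2 := Real.sq_sqrt (by positivity)
  have hxB : x ≤ B := Real.le_sqrt_of_sq_le (le_add_of_nonneg_right (sq_nonneg y))
  have hB : 0 < B := hx.trans_le hxB
  have htel : y ^ 2 / (t + B) - y ^ 2 / (t + 1 + B) = y ^ 2 / ((t + B) * (t + 1 + B)) := by
    field_simp
    ring
  rw [htel]
  refine div_le_div_of_nonneg_left (sq_nonneg y) (by positivity) ?_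
  nlinarith [mul_le_mul_of_nonneg_left hxB ht]

theorem sq_div_sqrt_le_tsum (hx : 0 < x) :
    y ^ 2 / √(x ^ 2 + y ^ 2) ≤ ∑' k : ℕ, y ^ 2 / (y ^ 2 + (x + k) ^ 2) := by
  have hlim : Tendsto (fun n : ℕ => y ^ 2 / (n + √(x ^ 2 + y ^ 2))) atTop (𝓝 0) :=
    tendsto_const_nhds.div_atTop (tendsto_atTop_add_const_right _ _ tendsto_natCast_atTop_atTop)
  have h := le_tsum_of_sub_succ_le hlim (summable_sq_div_sq_add_sq y hx) fun n => by
    exact_mod_cast sq_div_add_sqrt_sub_le y hx n.cast_nonneg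
  simpa using h

end

theorem sum_gt_two (x y : ℝ) (hx : 0 < x) (hxy : x < |y|) :
    (∑' k : ℕ, y ^ 2 / (y ^ 2 + (x + k) ^ 2)) > |y| / 2 := by
  have hy : 0 < |y| := hx.trans hxy
  have hB : √(x ^ 2 + y ^ 2) < 2 * |y| := by
    rw [Real.sqrt_lt' (by positivity), ← sq_abs y]
    nlinarith
  have hB0 : 0 < √(x ^ 2 + y ^ 2) := Real.sqrt_pos.mpr (by positivity)
  have hlt : |y| / 2 < y ^ 2 / √(x ^ 2 + y ^ 2) := by
    rw [div_lt_div_iff₀ two_pos hB0]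
    nlinarith [mul_lt_mul_of_pos_left hB hy, sq_abs y]
  exact hlt.trans_le (sq_div_sqrt_le_tsum y hx)
end

section
/- Let B be a finite set of primes with m = |B|, and let T₁ be a real number such that for every p ∈ B and every integer n, |T₁ − 2πn/log p| ≥ 2π/u, where u ≥ max B. Then |ζ_B(iT₁)| = ∏_{p∈B} 1/|2 sin(T₁ log p / 2)| ≤ (πu/4)^m · ∏_{p∈B} 1/log p. -/
open Complex Real

/-!
On the imaginary axis each Euler factor has modulus `|1 - p^{-iT}| = |2 sin (T log p / 2)|`.
The separation hypothesis says that `T log p / 2` stays at distance at least `π log p / u`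
from `πℤ`, so Jordan's inequality `sin y ≥ 2y/π` on `[0, π/2]` bounds `|2 sin (T log p / 2)|`
below by `4 log p / u`.
-/

lemma Complex.norm_one_sub_ofReal_cpow_neg_mul_I {x : ℝ} (hx : 0 < x) (t : ℝ) :
    ‖1 - (x : ℂ) ^ (-(t * I))‖ = |2 * Real.sin (t * Real.log x / 2)| := by
  have hexp : (x : ℂ) ^ (-(t * I)) = exp (I * ((-(t * Real.log x) : ℝ) : ℂ)) := by
    rw [cpow_def_of_ne_zero (ofReal_ne_zero.mpr hx.ne'), ← ofReal_log hx.le]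
    push_cast
    ring_nf
  rw [hexp, norm_sub_rev, norm_exp_I_mul_ofReal_sub_one, Real.norm_eq_abs, neg_div,
    Real.sin_neg, mul_neg, abs_neg]

lemma Real.two_div_pi_mul_le_abs_sin {x δ : ℝ} (h : ∀ n : ℤ, δ ≤ |x - n * π|) :
    2 / π * δ ≤ |Real.sin x| := by
  set n := round (x / π)
  have hnear : |x - n * π| ≤ π / 2 := by
    have hscale : x - n * π = (x / π - n) * π := by field_simp
    rw [hscale, abs_mul, abs_of_pos pi_pos]
    nlinarith [abs_sub_round (x / π), pi_pos]
  have hshift : |Real.sin x| = |Real.sin (x - n * π)| := by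
    rw [Real.sin_sub_int_mul_pi, abs_mul, abs_neg_one_zpow, one_mul]
  calc 2 / π * δ ≤ 2 / π * |x - n * π| := by gcongr; exact h n
    _ ≤ Real.sin |x - n * π| := mul_le_sin (abs_nonneg _) hnear
    _ = |Real.sin x| := by
      rw [hshift, abs_sin_eq_sin_abs_of_abs_le_pi (hnear.trans (by linarith [pi_pos]))]

lemma Real.one_div_abs_two_mul_sin_le {L u T : ℝ} (hL : 0 < L) (hu : 0 < u)
    (hT : ∀ n : ℤ, 2 * π / u ≤ |T - 2 * π * n / L|) :
    1 / |2 * Real.sin (T * L / 2)| ≤ u / 4 * (1 / L) := by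
  have hdist : ∀ n : ℤ, π * L / u ≤ |T * L / 2 - n * π| := fun n => by
    have hscale : T * L / 2 - n * π = L / 2 * (T - 2 * π * n / L) := by field_simp
    rw [hscale, abs_mul, abs_of_pos (half_pos hL)]
    calc π * L / u = L / 2 * (2 * π / u) := by ring
      _ ≤ L / 2 * |T - 2 * π * n / L| := by gcongr; exact hT n
  have hsin : 4 * L / u ≤ |2 * Real.sin (T * L / 2)| := by
    have hjordan := two_div_pi_mul_le_abs_sin hdist
    rw [abs_mul, abs_two]
    calc 4 * L / u = 2 * (2 / π * (π * L / u)) := by field_simp; ring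
      _ ≤ 2 * |Real.sin (T * L / 2)| := by gcongr
  calc 1 / |2 * Real.sin (T * L / 2)| ≤ 1 / (4 * L / u) :=
        one_div_le_one_div_of_le (by positivity) hsin
    _ = u / 4 * (1 / L) := by field_simp

theorem euler_prod_on_imag_axis (B : Finset ℕ) (hB : ∀ p ∈ B, p.Prime)
    (u T₁ : ℝ) (hu : ∀ p ∈ B, (p : ℝ) ≤ u)
    (hT : ∀ p ∈ B, ∀ n : ℤ, |T₁ - 2 * π * n / Real.log p| ≥ 2 * π / u) :
    ‖∏ p ∈ B, (1 - (p : ℂ) ^ (-(T₁ * I)))⁻¹‖ =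
      ∏ p ∈ B, 1 / |2 * Real.sin (T₁ * Real.log p / 2)| ∧
    ∏ p ∈ B, 1 / |2 * Real.sin (T₁ * Real.log p / 2)| ≤
      (π * u / 4) ^ B.card * ∏ p ∈ B, 1 / Real.log p := by
  have hp_gt_one : ∀ p ∈ B, (1 : ℝ) < p := fun p hp => by exact_mod_cast (hB p hp).one_lt
  refine ⟨?_, ?_⟩
  · rw [norm_prod]
    refine Finset.prod_congr rfl fun p hp => ?_
    rw [norm_inv, one_div, ← ofReal_natCast,
      norm_one_sub_ofReal_cpow_neg_mul_I (zero_lt_one.trans (hp_gt_one p hp))]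
  · have hfactor : ∀ p ∈ B, 1 / |2 * Real.sin (T₁ * Real.log p / 2)| ≤
        π * u / 4 * (1 / Real.log p) := fun p hp => by
      have hlog : 0 < Real.log p := Real.log_pos (hp_gt_one p hp)
      have hu_pos : 0 < u := by linarith [hp_gt_one p hp, hu p hp]
      refine (one_div_abs_two_mul_sin_le hlog hu_pos (hT p hp)).trans ?_
      gcongr
      nlinarith [pi_gt_three]
    calc _ ≤ ∏ p ∈ B, π * u / 4 * (1 / Real.log p) :=
          Finset.prod_le_prod (fun p _ => by positivity) hfactor
      _ = _ := by rw [Finset.prod_mul_distrib, Finset.prod_const]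
end

section
/- For real c > 0 and x > 0, the Mellin inversion formula (1/2πi)∫_{(c)} Γ(s/2)·x^(−s/2) ds = 2e^(−x) holds. -/
/-!
`Γ(s/2)` is the Mellin transform of `t ↦ 2 e^{-t²}` on `Re s > 0`, so the integral is the inverse
Mellin transform of that function at `√x`. Mellin inversion applies because `Γ` is integrable on
every vertical line `Re s = σ > 0`: the functional equation `Γ(s) = Γ(s + 2) / (s (s + 1))`
together with `|Γ(s + 2)| ≤ Γ(σ + 2)` gives `|Γ(σ + iy)| ≤ Γ(σ + 2) / (σ² + y²)`.
-/

open Complex Real MeasureTheory Set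

namespace Complex

lemma norm_Gamma_le_Gamma_re {s : ℂ} (hs : 0 < s.re) : ‖Gamma s‖ ≤ Real.Gamma s.re := by
  rw [Gamma_eq_integral hs, GammaIntegral, Real.Gamma_eq_integral hs]
  refine (norm_integral_le_integral_norm _).trans_eq <|
    setIntegral_congr_fun measurableSet_Ioi fun t ht => ?_
  rw [norm_mul, norm_real, Real.norm_eq_abs, norm_cpow_eq_rpow_re_of_pos ht,
    abs_of_pos (Real.exp_pos _)]
  simp

lemma norm_Gamma_le_div_normSq {s : ℂ} (hs : 0 < s.re) :
    ‖Gamma s‖ ≤ Real.Gamma (s.re + 2) / normSq s := by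
  have hs0 : s ≠ 0 := fun h => by simp [h] at hs
  have hs1 : s + 1 ≠ 0 := fun h => by
    have := congrArg re h
    simp only [add_re, one_re, zero_re] at this
    linarith
  have hrec : Gamma (s + 2) = (s + 1) * s * Gamma s := by
    rw [show s + 2 = s + 1 + 1 by ring, Gamma_add_one _ hs1, Gamma_add_one _ hs0, mul_assoc]
  -- same imaginary part, larger positive real part
  have hnorm : ‖s‖ ≤ ‖s + 1‖ := by
    rw [← sq_le_sq₀ (norm_nonneg _) (norm_nonneg _), ← normSq_eq_norm_sq, ← normSq_eq_norm_sq,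
      normSq_apply, normSq_apply]
    simp only [add_re, one_re, add_im, one_im, add_zero]
    nlinarith
  have hpos : 0 < normSq s := normSq_pos.mpr hs0
  rw [le_div_iff₀ hpos, normSq_eq_norm_sq]
  calc ‖Gamma s‖ * ‖s‖ ^ 2 = ‖s‖ * ‖s‖ * ‖Gamma s‖ := by ring
    _ ≤ ‖s + 1‖ * ‖s‖ * ‖Gamma s‖ := by gcongr
    _ = ‖Gamma (s + 2)‖ := by rw [hrec, norm_mul, norm_mul]
    _ ≤ Real.Gamma (s.re + 2) := by
        simpa using norm_Gamma_le_Gamma_re (s := s + 2) (by simp; linarith)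

lemma continuousAt_Gamma_of_re_pos {s : ℂ} (hs : 0 < s.re) : ContinuousAt Gamma s :=
  continuousAt_Gamma s fun m h => by
    have := congrArg re h
    simp only [neg_re, natCast_re] at this
    linarith [(m.cast_nonneg : (0 : ℝ) ≤ m)]

lemma verticalIntegrable_Gamma {σ : ℝ} (hσ : 0 < σ) : VerticalIntegrable Gamma σ := by
  have hcont : Continuous fun y : ℝ => Gamma (σ + y * I) :=
    continuous_iff_continuousAt.mpr fun y =>
      (continuousAt_Gamma_of_re_pos (by simpa using hσ)).comp (by fun_prop)
  have hbound : ∀ y : ℝ, ‖Gamma (σ + y * I)‖ ≤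
      Real.Gamma (σ + 2) / σ ^ 2 * (1 + (y / σ) ^ 2)⁻¹ := fun y => by
    convert norm_Gamma_le_div_normSq (s := σ + y * I) (by simpa using hσ) using 1
    simp [normSq_apply]
    field_simp
  exact ((integrable_inv_one_add_sq.comp_div hσ.ne').const_mul _).mono'
    hcont.aestronglyMeasurable (Filter.Eventually.of_forall hbound)

lemma VerticalIntegrable.comp_div_ofReal {E : Type*} [NormedAddCommGroup E] {f : ℂ → E}
    {σ p : ℝ} (hf : VerticalIntegrable f (σ / p)) (hp : p ≠ 0) :
    VerticalIntegrable (fun s => f (s / p)) σ := by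
  refine (hf.comp_div hp).congr (Filter.Eventually.of_forall fun y => ?_)
  simp only [ofReal_div]
  ring_nf

lemma ofReal_sqrt_cpow {x : ℝ} (hx : 0 ≤ x) (s : ℂ) :
    ((√x : ℝ) : ℂ) ^ s = (x : ℂ) ^ (s / 2) := by
  rw [Real.sqrt_eq_rpow, ← cpow_mul_ofReal_nonneg hx]
  congr 1
  push_cast
  ring

end Complex

lemma mellinConvergent_exp_neg_rpow {p : ℝ} (hp : 0 < p) {s : ℂ} (hs : 0 < s.re) :
    MellinConvergent (fun t : ℝ => (rexp (-t ^ p) : ℂ)) s := by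
  refine (MellinConvergent.comp_rpow (f := fun t : ℝ => (rexp (-t) : ℂ)) hp.ne').mpr ?_
  refine (GammaIntegral_convergent (s := s / p) ?_).congr_fun (fun t _ => mul_comm _ _)
    measurableSet_Ioi
  rw [div_ofReal_re]
  positivity

lemma mellin_exp_neg_rpow {p : ℝ} (hp : 0 < p) {s : ℂ} (hs : 0 < s.re) :
    mellin (fun t : ℝ => (rexp (-t ^ p) : ℂ)) s = Gamma (s / p) / p := by
  rw [mellin_comp_rpow (fun t : ℝ => (rexp (-t) : ℂ)), ← GammaIntegral_eq_mellin,
    ← Gamma_eq_integral (by rw [div_ofReal_re]; positivity), abs_of_pos hp, real_smul,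
    ofReal_inv, inv_mul_eq_div]

lemma mellinInv_Gamma_div {p σ y : ℝ} (hp : 0 < p) (hσ : 0 < σ) (hy : 0 < y) :
    mellinInv σ (fun s => Gamma (s / p)) y = p * rexp (-y ^ p) := by
  set f : ℝ → ℂ := fun t => (p : ℂ) • (rexp (-t ^ p) : ℂ)
  have hmellin : ∀ s : ℂ, 0 < s.re → mellin f s = Gamma (s / p) := fun s hs => by
    rw [mellin_const_smul, mellin_exp_neg_rpow hp hs, smul_eq_mul,
      mul_div_cancel₀ _ (ofReal_ne_zero.mpr hp.ne')]
  have hline : ∀ t : ℝ, 0 < ((σ : ℂ) + t * I).re := fun t => by simpa using hσ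
  have hconv : MellinConvergent f σ :=
    (mellinConvergent_exp_neg_rpow hp (by simpa using hσ)).const_smul _
  have hvert : VerticalIntegrable (mellin f) σ :=
    ((verticalIntegrable_Gamma (div_pos hσ hp)).comp_div_ofReal hp.ne').congr
      (Filter.Eventually.of_forall fun t => (hmellin _ (hline t)).symm)
  have hcont : ContinuousAt f y := by
    have := Real.continuousAt_rpow_const y p (Or.inl hy.ne')
    fun_prop
  calc mellinInv σ (fun s => Gamma (s / p)) y = mellinInv σ (mellin f) y := by
        simp only [mellinInv, hmellin _ (hline _)]
    _ = f y := mellinInv_mellin_eq σ f hy hconv hvert hcont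
    _ = p * rexp (-y ^ p) := smul_eq_mul ..

theorem mellin_inversion_gamma (c x : ℝ) (hc : 0 < c) (hx : 0 < x) :
    (1 / (2 * π)) * ∫ t : ℝ,
        Complex.Gamma ((c + t * I) / 2) * (x : ℂ) ^ (-(c + t * I) / 2) =
      2 * Real.exp (-x) := by
  calc (1 / (2 * π)) * ∫ t : ℝ, Gamma ((c + t * I) / 2) * (x : ℂ) ^ (-(c + t * I) / 2)
      = mellinInv c (fun s => Gamma (s / (2 : ℝ))) √x := by
        simp only [mellinInv, ofReal_sqrt_cpow hx.le, real_smul, smul_eq_mul, neg_div]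
        push_cast
        simp only [mul_comm]
    _ = 2 * rexp (-x) := by
        rw [mellinInv_Gamma_div two_pos hc (Real.sqrt_pos.mpr hx), Real.rpow_two,
          Real.sq_sqrt hx.le]
        simp
end
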